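/- Let n ≥ a+b with a,b ≥ 1, and let A ⊆ C([n],a) and B ⊆ C([n],b) be cross-intersecting families. Then either |A| ≤ C(n−1, a−1) or |B| ≤ C(n−1, b−1). -/

import Mathlib

/-!
If `|𝒜| > C(n-1, a-1)`, then the complements of the sets in `𝒜` form a family of
`(n-a)`-sets with more than `C(n-1, n-a)` members, so by the Lovász form of Kruskal–Katona
their `(n-a-b)`-fold shadow has at least `C(n-1, b)` members. That shadow consists of
`b`-sets each contained in the complement of a member of `𝒜`, so it is disjoint from `ℬ`;
hence `|ℬ| ≤ C(n, b) - C(n-1, b) = C(n-1, b-1)`.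
-/

open Finset
open scoped FinsetFamily

namespace Finset

theorem disjoint_shadow_iterate_compls {α : Type*} [Fintype α] [DecidableEq α]
    {𝒜 ℬ : Finset (Finset α)} (hcross : ∀ A ∈ 𝒜, ∀ B ∈ ℬ, (A ∩ B).Nonempty) (k : ℕ) :
    Disjoint ℬ (∂^[k] 𝒜ᶜˢ) := by
  refine disjoint_right.2 fun B hB hBℬ => ?_
  obtain ⟨C, hC, hBC, -⟩ := mem_shadow_iterate_iff_exists_sdiff.1 hB
  obtain ⟨x, hx⟩ := hcross _ (mem_compls.1 hC) B hBℬ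
  exact mem_compl.1 (mem_inter.1 hx).1 (hBC (mem_inter.1 hx).2)

variable {n a b : ℕ} {𝒜 ℬ : Finset (Finset (Fin n))}

theorem choose_le_card_shadow_iterate_compls (ha : 1 ≤ a) (hn : a + b ≤ n)
    (h𝒜 : (𝒜 : Set (Finset (Fin n))).Sized a) (hlarge : (n - 1).choose (a - 1) ≤ #𝒜) :
    (n - 1).choose b ≤ #(∂^[n - a - b] 𝒜ᶜˢ) := by
  have hsized : (𝒜ᶜˢ : Set (Finset (Fin n))).Sized (n - a) := by simpa using h𝒜.compls
  have hcompls : (n - 1).choose (n - a) ≤ #𝒜ᶜˢ := by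
    rwa [card_compls, Nat.choose_symm_of_eq_add (show n - 1 = (n - a) + (a - 1) by omega)]
  have hkk := kruskal_katona_lovasz_form (i := n - a - b) (by omega) (by omega) (Nat.sub_le n 1)
    hsized hcompls
  rwa [show n - a - (n - a - b) = b by omega] at hkk

theorem card_le_choose_pred_of_cross_intersecting (ha : 1 ≤ a) (hb : 1 ≤ b) (hn : a + b ≤ n)
    (h𝒜 : (𝒜 : Set (Finset (Fin n))).Sized a) (hℬ : (ℬ : Set (Finset (Fin n))).Sized b)
    (hcross : ∀ A ∈ 𝒜, ∀ B ∈ ℬ, (A ∩ B).Nonempty) (hlarge : (n - 1).choose (a - 1) ≤ #𝒜) :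
    #ℬ ≤ (n - 1).choose (b - 1) := by
  have hshadow : (∂^[n - a - b] 𝒜ᶜˢ : Set (Finset (Fin n))).Sized b := by
    simpa [show n - a - (n - a - b) = b by omega] using h𝒜.compls.shadow_iterate (k := n - a - b)
  have hunion : #ℬ + #(∂^[n - a - b] 𝒜ᶜˢ) ≤ n.choose b := by
    rw [← card_union_of_disjoint (disjoint_shadow_iterate_compls hcross _)]
    have hsized : ((ℬ ∪ ∂^[n - a - b] 𝒜ᶜˢ : Finset _) : Set (Finset (Fin n))).Sized b := by
      simpa only [coe_union] using Set.sized_union.2 ⟨hℬ, hshadow⟩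
    simpa using hsized.card_le
  have hkk := choose_le_card_shadow_iterate_compls ha hn h𝒜 hlarge
  rw [Nat.choose_eq_choose_pred_add (by omega) hb] at hunion
  omega

theorem map_univ_eq_Icc_one (n : ℕ) :
    (univ : Finset (Fin n)).map (Fin.valEmbedding.trans (addRightEmbedding 1)) = Icc 1 n := by
  ext x
  simp only [mem_Icc, mem_map, mem_univ, true_and, Function.Embedding.trans_apply,
    Fin.valEmbedding_apply, addRightEmbedding_apply]
  exact ⟨by rintro ⟨i, rfl⟩; omega, fun h => ⟨⟨x - 1, by omega⟩, Nat.sub_add_cancel h.1⟩⟩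

end Finset

/-- If `n ≥ a + b` with `a, b ≥ 1` and `𝒜 ⊆ C([n],a)`, `ℬ ⊆ C([n],b)` are
cross-intersecting, then `|𝒜| ≤ C(n-1, a-1)` or `|ℬ| ≤ C(n-1, b-1)`. -/
theorem cross_intersecting_one_small (n a b : ℕ) (ha : 1 ≤ a) (hb : 1 ≤ b)
    (hn : a + b ≤ n)
    (𝒜 ℬ : Finset (Finset ℕ))
    (h𝒜 : 𝒜 ⊆ (Finset.Icc 1 n).powersetCard a)
    (hℬ : ℬ ⊆ (Finset.Icc 1 n).powersetCard b)
    (hcross : ∀ A ∈ 𝒜, ∀ B ∈ ℬ, (A ∩ B).Nonempty) :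
    𝒜.card ≤ (n - 1).choose (a - 1) ∨ ℬ.card ≤ (n - 1).choose (b - 1) := by
  rw [← map_univ_eq_Icc_one, powersetCard_map, subset_map_iff] at h𝒜 hℬ
  obtain ⟨𝒜', h𝒜', rfl⟩ := h𝒜
  obtain ⟨ℬ', hℬ', rfl⟩ := hℬ
  rw [card_map, card_map]
  refine or_iff_not_imp_left.2 fun hlarge => card_le_choose_pred_of_cross_intersecting ha hb hn
    (subset_powersetCard_univ_iff.1 h𝒜') (subset_powersetCard_univ_iff.1 hℬ') ?_
    (not_le.1 hlarge).le
  intro A hA B hB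
  simpa [← map_inter] using hcross _ (mem_map_of_mem _ hA) _ (mem_map_of_mem _ hB)
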